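/- arXiv:2603.25134 — 3 statements merged into one kernel-verified Lean document; each statement's English description precedes it below -/
import Mathlib

section
/- Let h ≥ 1 and let A = (a_{ij}) be an h × h matrix with nonnegative integer entries such that all column sums of A are equal and at least 2, i.e., ∑_{i=1}^h a_{i1} = ∑_{i=1}^h a_{i2} = ⋯ = ∑_{i=1}^h a_{ih} = c ≥ 2. Then there exist positive integers m ≠ n and nonnegative integers p₁,…,p_m, q₁,…,q_n such that (1,1,…,1)(A^{p₁} + ⋯ + A^{p_m}) = (1,1,…,1)(A^{q₁} + ⋯ + A^{q_n}), where (1,1,…,1) is the all-ones row vector of length h. (By the main theorem of the paper, for a finite graph E without sinks with adjacency matrix A = A_E, this condition is equivalent to the Leavitt path algebra L_K(E) failing to have graded Invariant Basis Number.) -/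
/-! A single copy of `A` already does it: since every column of `A` sums to `c`,
`(1,…,1) A = c (1,…,1) = (1,…,1)(A⁰ + ⋯ + A⁰)` with `c` summands, and `1 ≠ c`. -/

theorem Matrix.vecMul_const_one_of_colSum {ι R : Type*} [Fintype ι] [NonAssocSemiring R]
    (A : Matrix ι ι R) {c : R} (hcol : ∀ j, ∑ i, A i j = c) :
    Matrix.vecMul (fun _ => 1) A = fun _ => c := by
  funext j
  simp [Matrix.vecMul, dotProduct, hcol j]

theorem exists_onesRow_powSum_eq_of_colSum_general {h : ℕ}
    (A : Matrix (Fin h) (Fin h) ℕ) (c : ℕ) (hc : 2 ≤ c)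
    (hcol : ∀ j : Fin h, ∑ i : Fin h, A i j = c) :
    ∃ m n : ℕ, 0 < m ∧ 0 < n ∧ m ≠ n ∧
      ∃ (p : Fin m → ℕ) (q : Fin n → ℕ),
        Matrix.vecMul (fun _ => 1) (∑ j : Fin m, A ^ p j) =
          Matrix.vecMul (fun _ => 1) (∑ l : Fin n, A ^ q l) := by
  refine ⟨1, c, one_pos, by omega, by omega, fun _ => 1, fun _ => 0, ?_⟩
  have hid : (∑ _l : Fin c, A ^ 0) = (c : Matrix (Fin h) (Fin h) ℕ) := by
    simp
  rw [Fin.sum_univ_one, pow_one, hid, Matrix.vecMul_const_one_of_colSum A hcol]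
  funext j
  simp [Matrix.vecMul_natCast]

/-- If all column sums of the `h × h` matrix `A` over `ℕ` equal a common value
`c ≥ 2`, then there exist positive integers `m ≠ n` and nonnegative integers
`p₁,…,p_m, q₁,…,q_n` with
`(1,…,1)(A^{p₁} + ⋯ + A^{p_m}) = (1,…,1)(A^{q₁} + ⋯ + A^{q_n})`. -/
theorem exists_onesRow_powSum_eq_of_colSum {h : ℕ} (hh : 1 ≤ h)
    (A : Matrix (Fin h) (Fin h) ℕ) (c : ℕ) (hc : 2 ≤ c)
    (hcol : ∀ j : Fin h, ∑ i : Fin h, A i j = c) :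
    ∃ m n : ℕ, 0 < m ∧ 0 < n ∧ m ≠ n ∧
      ∃ (p : Fin m → ℕ) (q : Fin n → ℕ),
        Matrix.vecMul (fun _ => 1) (∑ j : Fin m, A ^ p j) =
          Matrix.vecMul (fun _ => 1) (∑ l : Fin n, A ^ q l) :=
  exists_onesRow_powSum_eq_of_colSum_general A c hc hcol
end

section
/- Let G be a finite group and let S be a subset of G with |S| ≥ 2. Define the adjacency matrix A of the Cayley graph E_{G,S}, indexed by G × G, by A_{g,h} = 1 if g⁻¹h ∈ S and A_{g,h} = 0 otherwise. Then there exist positive integers m ≠ n and nonnegative integers p₁,…,p_m, q₁,…,q_n such that (1,1,…,1)(A^{p₁} + ⋯ + A^{p_m}) = (1,1,…,1)(A^{q₁} + ⋯ + A^{q_n}), where (1,1,…,1) is the all-ones row vector indexed by G. (This is the combinatorial core of the implication that if |S| ≥ 2 then the Leavitt path algebra of the Cayley graph E_{G,S} fails to have graded Invariant Basis Number.) -/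
/-!
Every column of the Cayley adjacency matrix sums to `|S|`, so `(1,…,1) A = |S| (1,…,1)`,
which is `(1,…,1)` times a sum of `|S|` copies of `A⁰`: take `m = 1`, `n = |S|`.
-/

open Matrix

theorem sum_cayleyAdj_col_eq_card {G : Type*} [Group G] [Fintype G] [DecidableEq G]
    (S : Finset G) (A : Matrix G G ℕ)
    (hA : ∀ g h : G, A g h = if g⁻¹ * h ∈ S then 1 else 0) (h : G) : ∑ g, A g h = S.card :=
  calc ∑ g, A g h
      = ∑ g : G, if g⁻¹ * h ∈ S then 1 else 0 := Finset.sum_congr rfl fun g _ => hA g h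
    _ = ∑ s : G, if s ∈ S then 1 else 0 :=
        Fintype.sum_equiv ((Equiv.inv G).trans (Equiv.mulRight h)) _ _ fun _ => rfl
    _ = S.card := by simp

theorem ones_vecMul_eq_const_of_sum_col_eq {ι R : Type*} [Fintype ι] [NonAssocSemiring R]
    (A : Matrix ι ι R) (k : R) (hA : ∀ j, ∑ i, A i j = k) :
    (fun _ : ι => (1 : R)) ᵥ* A = fun _ => k := by
  ext j
  simp only [vecMul, dotProduct, one_mul, hA]

theorem ones_vecMul_sum_pow_zero {ι R : Type*} [Fintype ι] [DecidableEq ι] [Semiring R]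
    (A : Matrix ι ι R) (k : ℕ) :
    (fun _ : ι => (1 : R)) ᵥ* (∑ _ : Fin k, A ^ 0) = fun _ => (k : R) := by
  ext i
  simp

/-- Let `G` be a finite group and `S ⊆ G` with `|S| ≥ 2`, and let `A` be the
adjacency matrix of the Cayley graph `E_{G,S}` (so `A g h = 1` if `g⁻¹h ∈ S`
and `0` otherwise). Then there exist positive integers `m ≠ n` and nonnegative
integers `p₁,…,p_m, q₁,…,q_n` with
`(1,…,1)(A^{p₁} + ⋯ + A^{p_m}) = (1,…,1)(A^{q₁} + ⋯ + A^{q_n})`. -/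
theorem cayley_exists_onesRow_powSum_eq {G : Type*} [Group G] [Fintype G]
    [DecidableEq G] (S : Finset G) (hS : 2 ≤ S.card) (A : Matrix G G ℕ)
    (hA : ∀ g h : G, A g h = if g⁻¹ * h ∈ S then 1 else 0) :
    ∃ m n : ℕ, 0 < m ∧ 0 < n ∧ m ≠ n ∧
      ∃ (p : Fin m → ℕ) (q : Fin n → ℕ),
        Matrix.vecMul (fun _ => 1) (∑ j : Fin m, A ^ p j) =
          Matrix.vecMul (fun _ => 1) (∑ l : Fin n, A ^ q l) := by
  refine ⟨1, S.card, one_pos, by omega, by omega, fun _ => 1, fun _ => 0, ?_⟩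
  rw [ones_vecMul_sum_pow_zero, Fin.sum_univ_one, pow_one, Nat.cast_id]
  exact ones_vecMul_eq_const_of_sum_col_eq A _ (sum_cayleyAdj_col_eq_card S A hA)
end

section
/- Let G be a finite group, 𝒞 the set of conjugacy classes of G, and 𝔯 : 𝒞 → ℕ a ramification data with ∑_{C ∈ 𝒞} 𝔯(C)·|C| ≥ 2. Let A be the adjacency matrix of the Hopf graph Γ_{G,𝔯}, indexed by G × G, given by A_{x,y} = 𝔯([x⁻¹y]). Then there exist positive integers m ≠ n and nonnegative integers p₁,…,p_m, q₁,…,q_n such that (1,1,…,1)(A^{p₁} + ⋯ + A^{p_m}) = (1,1,…,1)(A^{q₁} + ⋯ + A^{q_n}), where (1,1,…,1) is the all-ones row vector indexed by G. (This is the combinatorial core of the implication that if ∑_{C} 𝔯(C)·|C| ≥ 2 then the Leavitt path algebra of the Hopf graph Γ_{G,𝔯} fails to have graded Invariant Basis Number.) -/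
/-! Every column of `A` sums to `d = ∑ 𝔯(C)|C|`, so `(1,…,1) A = d (1,…,1) = (1,…,1)(A⁰ + ⋯ + A⁰)`
with `d` summands; as `d ≥ 2`, `m = 1` and `n = d` are distinct. -/

open Finset

theorem ConjClasses.sum_ncard_smul_eq_sum_mk {G M : Type*} [Group G] [Fintype G]
    [Fintype (ConjClasses G)] [AddCommMonoid M] (f : ConjClasses G → M) :
    ∑ C : ConjClasses G, (C.carrier.ncard : ℕ) • f C = ∑ g : G, f (ConjClasses.mk g) := by
  classical
  rw [← sum_fiberwise univ ConjClasses.mk (fun g => f (ConjClasses.mk g))]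
  refine sum_congr rfl fun C _ => ?_
  rw [sum_congr rfl fun g hg => congrArg f (mem_filter.mp hg).2, sum_const,
    Set.ncard_eq_toFinset_card']
  congr 2
  ext g
  simp [ConjClasses.mem_carrier_iff_mk_eq]

theorem Matrix.ones_vecMul_of_apply_eq_inv_mul {G R : Type*} [Group G] [Fintype G]
    [NonAssocSemiring R] {A : Matrix G G R} {f : G → R} (hA : ∀ x y, A x y = f (x⁻¹ * y)) :
    vecMul (fun _ => 1) A = fun _ => ∑ z, f z := by
  funext y
  simp only [vecMul, dotProduct, one_mul, hA]
  exact ((Equiv.inv G).trans (Equiv.mulRight y)).sum_comp f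

/-- Let `G` be a finite group with ramification data `𝔯 : ConjClasses G → ℕ`
satisfying `∑_{C} 𝔯(C) * |C| ≥ 2`, and let `A` be the adjacency matrix of the
Hopf graph `Γ_{G,𝔯}`, given by `A x y = 𝔯 [x⁻¹y]`. Then there exist positive
integers `m ≠ n` and nonnegative integers `p₁,…,p_m, q₁,…,q_n` with
`(1,…,1)(A^{p₁} + ⋯ + A^{p_m}) = (1,…,1)(A^{q₁} + ⋯ + A^{q_n})`. -/
theorem hopf_exists_onesRow_powSum_eq {G : Type*} [Group G] [Fintype G]
    [DecidableEq G] [Fintype (ConjClasses G)] (𝔯 : ConjClasses G → ℕ)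
    (h𝔯 : 2 ≤ ∑ C : ConjClasses G, 𝔯 C * C.carrier.ncard)
    (A : Matrix G G ℕ)
    (hA : ∀ x y : G, A x y = 𝔯 (ConjClasses.mk (x⁻¹ * y))) :
    ∃ m n : ℕ, 0 < m ∧ 0 < n ∧ m ≠ n ∧
      ∃ (p : Fin m → ℕ) (q : Fin n → ℕ),
        Matrix.vecMul (fun _ => 1) (∑ j : Fin m, A ^ p j) =
          Matrix.vecMul (fun _ => 1) (∑ l : Fin n, A ^ q l) := by
  set d := ∑ C : ConjClasses G, 𝔯 C * C.carrier.ncard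
  have hcol : Matrix.vecMul (fun _ => 1) A = fun _ => d := by
    rw [Matrix.ones_vecMul_of_apply_eq_inv_mul (f := fun z => 𝔯 (ConjClasses.mk z)) hA,
      ← ConjClasses.sum_ncard_smul_eq_sum_mk]
    simp only [d, smul_eq_mul, mul_comm]
  refine ⟨1, d, one_pos, by omega, by omega, fun _ => 1, fun _ => 0, ?_⟩
  funext y
  simp [hcol]
end
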